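/- Let the filtration (𝓕_n)_{n∈ℕ} on (Ω, 𝓕) satisfy condition A, let the mutually equivalent probability measures P₁, …, P_k satisfy condition B with distinguished index i₀, and let M = {Σ_{i=1}^k α_i P_i : α_i ≥ 0, Σ α_i = 1}. Let ξ be a nonnegative random variable integrable with respect to each P_i such that E^{P_i} ξ = M₀ for all i = 1, …, k. Then the process (M_m)_{m∈ℕ} defined by M_m = max_{1≤i≤k} E^{P_i}[ξ | 𝓕_m] is a martingale relative to M: for every Q ∈ M and every m ≥ 1, E^Q[M_m | 𝓕_{m−1}] = M_{m−1} a.s., and E^Q M_m = M₀ for all m. -/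

import Mathlib

/-!
Condition B bounds the one-step transition probabilities `P i (A (n+1) j) / P i (A n s)` by
those of `P i₀`; both sum to `1` over the children of `A n s`, so they coincide. Hence every
`P i`, and with it every mixture `Q`, is a constant multiple of `P i₀` on each level-`0` atom,
i.e. has an `ℱ 0`-measurable density with respect to `P i₀`. A density that is measurable for
`ℱ m` does not change conditional expectations given `ℱ m`, so all the `E^{P i}[ξ | ℱ m]` agree
`Q`-a.s. with `E^Q[ξ | ℱ m]`: the maximum is the Doob martingale of `ξ` under every `Q`.
-/

open MeasureTheory Filter Set
open scoped ENNReal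

/-- **Condition A** of the paper. -/
structure CondA {Ω : Type*} (m0 : MeasurableSpace Ω) (ℱ : MeasureTheory.Filtration ℕ m0)
    (A : ℕ → ℕ → Set Ω) (I : ℕ → ℕ → Set ℕ) : Prop where
  gen_top : (⨆ n, (ℱ n : MeasurableSpace Ω)) = m0
  gen : ∀ n, (ℱ n : MeasurableSpace Ω) = MeasurableSpace.generateFrom (Set.range (A n))
  disj : ∀ n, Pairwise (Function.onFun Disjoint (A n))
  cover : ∀ n, (⋃ s, A n s) = Set.univ
  idisj : ∀ n, Pairwise (Function.onFun Disjoint (I n))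
  icover : ∀ n, (⋃ s, I n s) = Set.univ
  refines : ∀ n s, A n s = ⋃ j ∈ I n s, A (n + 1) j

/-- **Condition B** of the paper, with distinguished index `i₀`. -/
structure CondB {Ω : Type*} {m0 : MeasurableSpace Ω} {k : ℕ}
    (P : Fin (k + 1) → MeasureTheory.Measure Ω)
    (A : ℕ → ℕ → Set Ω) (I : ℕ → ℕ → Set ℕ) (i₀ : Fin (k + 1)) : Prop where
  pos : ∀ n s, 0 < P 0 (A n s)
  dom : ∀ (i : Fin (k + 1)) (n s j : ℕ), j ∈ I n s →
    (P i (A (n + 1) j)).toReal / (P i (A n s)).toReal ≤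
    (P i₀ (A (n + 1) j)).toReal / (P i₀ (A n s)).toReal

/-- The convex set of measures generated by the finite family `P`. -/
def mixSet {Ω : Type*} {m0 : MeasurableSpace Ω} {k : ℕ} (P : Fin (k + 1) → MeasureTheory.Measure Ω) :
    Set (MeasureTheory.Measure Ω) :=
  {Q | ∃ α : Fin (k + 1) → ℝ, (∀ i, 0 ≤ α i) ∧ (∑ i, α i = 1) ∧
    Q = ∑ i, (ENNReal.ofReal (α i)) • P i}

open scoped NNReal

theorem ENNReal.eq_of_le_of_tsum_eq {α : Type*} {f g : α → ℝ≥0∞} (hf : ∑' a, f a ≠ ∞)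
    (hle : ∀ a, f a ≤ g a) (hsum : ∑' a, f a = ∑' a, g a) (a : α) : f a = g a :=
  (hle a).eq_or_lt.resolve_right fun hlt => (ENNReal.tsum_lt_tsum hf hle hlt).ne hsum

theorem condExp_withDensity_ae_eq {Ω : Type*} {m m0 : MeasurableSpace Ω} (hm : m ≤ m0)
    {μ : Measure Ω} [IsFiniteMeasure μ] {g : Ω → ℝ≥0} (hg : Measurable[m] g)
    [IsFiniteMeasure (μ.withDensity fun ω => g ω)] {f : Ω → ℝ} (hfμ : Integrable f μ)
    (hfν : Integrable f (μ.withDensity fun ω => g ω)) :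
    (μ.withDensity fun ω => g ω)[f|m] =ᵐ[μ.withDensity fun ω => g ω] μ[f|m] := by
  have hg0 : Measurable g := hg.mono hm le_rfl
  have hgf : Integrable ((fun ω => (g ω : ℝ)) * f) μ := by
    simpa [Pi.mul_def, NNReal.smul_def] using
      (integrable_withDensity_iff_integrable_smul hg0).mp hfν
  have hpull : μ[(fun ω => (g ω : ℝ)) * f|m] =ᵐ[μ] (fun ω => (g ω : ℝ)) * μ[f|m] :=
    condExp_mul_of_stronglyMeasurable_left hg.coe_nnreal_real.stronglyMeasurable hgf hfμ
  have hint : Integrable (μ[f|m]) (μ.withDensity fun ω => g ω) := by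
    rw [integrable_withDensity_iff_integrable_smul hg0]
    simpa [Pi.mul_def, NNReal.smul_def] using integrable_condExp.congr hpull
  refine (ae_eq_condExp_of_forall_setIntegral_eq hm hfν (fun s _ _ => hint.integrableOn)
    (fun s hs _ => ?_) stronglyMeasurable_condExp.aestronglyMeasurable).symm
  rw [restrict_withDensity (hm s hs), integral_withDensity_eq_integral_smul hg0,
    integral_withDensity_eq_integral_smul hg0]
  calc ∫ ω in s, g ω • (μ[f|m]) ω ∂μ
      = ∫ ω in s, (μ[(fun ω => (g ω : ℝ)) * f|m]) ω ∂μ :=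
        integral_congr_ae (ae_restrict_of_ae (hpull.mono fun ω hω => by
          simp [hω, NNReal.smul_def]))
    _ = ∫ ω in s, g ω • f ω ∂μ := setIntegral_condExp hm hgf hs

namespace CondA

variable {Ω : Type*} {m0 : MeasurableSpace Ω} {ℱ : Filtration ℕ m0}
  {A : ℕ → ℕ → Set Ω} {I : ℕ → ℕ → Set ℕ}

theorem measurableSet_atom (hA : CondA m0 ℱ A I) (n s : ℕ) : MeasurableSet[ℱ n] (A n s) := by
  rw [hA.gen n]
  exact MeasurableSpace.measurableSet_generateFrom (mem_range_self s)

theorem exists_mem_atom (hA : CondA m0 ℱ A I) (n : ℕ) (ω : Ω) : ∃ s, ω ∈ A n s :=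
  mem_iUnion.mp (hA.cover n ▸ mem_univ ω)

theorem eq_of_mem_atom (hA : CondA m0 ℱ A I) {n s t : ℕ} {ω : Ω} (hs : ω ∈ A n s)
    (ht : ω ∈ A n t) : s = t := by
  by_contra hst
  exact Set.disjoint_left.mp (hA.disj n hst) hs ht

theorem exists_mem_index (hA : CondA m0 ℱ A I) (n j : ℕ) : ∃ s, j ∈ I n s :=
  mem_iUnion.mp (hA.icover n ▸ mem_univ j)

theorem atom_subset_of_mem_index (hA : CondA m0 ℱ A I) {n s j : ℕ} (hj : j ∈ I n s) :
    A (n + 1) j ⊆ A n s :=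
  hA.refines n s ▸ subset_biUnion_of_mem hj

theorem exists_atom_superset (hA : CondA m0 ℱ A I) {m n : ℕ} (hmn : m ≤ n) (j : ℕ) :
    ∃ s, A n j ⊆ A m s := by
  induction n, hmn using Nat.le_induction generalizing j with
  | base => exact ⟨j, subset_rfl⟩
  | succ n _ ih =>
    obtain ⟨s', hjs'⟩ := hA.exists_mem_index n j
    obtain ⟨s, hs⟩ := ih s'
    exact ⟨s, (hA.atom_subset_of_mem_index hjs').trans hs⟩

theorem atom_subset_of_nonempty (hA : CondA m0 ℱ A I) {m n s j : ℕ} (hmn : m ≤ n)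
    (hne : (A n j ∩ A m s).Nonempty) : A n j ⊆ A m s := by
  obtain ⟨t, ht⟩ := hA.exists_atom_superset hmn j
  obtain ⟨ω, hωj, hωs⟩ := hne
  rwa [hA.eq_of_mem_atom hωs (ht hωj)]

theorem isPiSystem_atoms (hA : CondA m0 ℱ A I) : IsPiSystem (⋃ n, range (A n)) := by
  have key : ∀ m n s j, m ≤ n → (A n j ∩ A m s).Nonempty →
      A n j ∩ A m s ∈ ⋃ n, range (A n) := fun m n s j hmn hne => by
    rw [inter_eq_self_of_subset_left (hA.atom_subset_of_nonempty hmn hne)]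
    exact mem_iUnion_of_mem n (mem_range_self j)
  rintro _ ⟨_, ⟨n, rfl⟩, s, rfl⟩ _ ⟨_, ⟨n', rfl⟩, s', rfl⟩ hne
  rcases le_total n n' with h | h
  · exact inter_comm (A n s) _ ▸ key n n' s s' h (inter_comm (A n s) _ ▸ hne)
  · exact key n' n s' s h hne

theorem generateFrom_atoms (hA : CondA m0 ℱ A I) :
    MeasurableSpace.generateFrom (⋃ n, range (A n)) = m0 := by
  rw [← hA.gen_top, ← MeasurableSpace.iSup_generateFrom]
  simp_rw [hA.gen]

theorem measure_univ_eq_tsum (hA : CondA m0 ℱ A I) (μ : Measure Ω) :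
    μ univ = ∑' s, μ (A 0 s) := by
  rw [← hA.cover 0]
  exact measure_iUnion (hA.disj 0) fun s => ℱ.le 0 _ (hA.measurableSet_atom 0 s)

theorem measure_atom_eq_tsum (hA : CondA m0 ℱ A I) (μ : Measure Ω) (n s : ℕ) :
    μ (A n s) = ∑' j : I n s, μ (A (n + 1) j) := by
  rw [hA.refines n s, biUnion_eq_iUnion]
  exact measure_iUnion (fun j j' hne => hA.disj (n + 1) (Subtype.coe_ne_coe.mpr hne))
    fun j => ℱ.le (n + 1) _ (hA.measurableSet_atom (n + 1) j)

theorem measure_ext (hA : CondA m0 ℱ A I) {μ ν : Measure Ω} [IsFiniteMeasure μ]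
    (h : ∀ n s, μ (A n s) = ν (A n s)) : μ = ν :=
  ext_of_generate_finite _ hA.generateFrom_atoms.symm hA.isPiSystem_atoms
    (by rintro _ ⟨_, ⟨n, rfl⟩, s, rfl⟩; exact h n s)
    (by simp only [hA.measure_univ_eq_tsum, h 0])

noncomputable def rootIndex (hA : CondA m0 ℱ A I) (ω : Ω) : ℕ :=
  (hA.exists_mem_atom 0 ω).choose

theorem mem_atom_rootIndex (hA : CondA m0 ℱ A I) (ω : Ω) : ω ∈ A 0 (hA.rootIndex ω) :=
  (hA.exists_mem_atom 0 ω).choose_spec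

theorem rootIndex_eq_of_mem (hA : CondA m0 ℱ A I) {ω : Ω} {s : ℕ} (hω : ω ∈ A 0 s) :
    hA.rootIndex ω = s :=
  hA.eq_of_mem_atom (hA.mem_atom_rootIndex ω) hω

theorem measurable_rootIndex (hA : CondA m0 ℱ A I) : Measurable[ℱ 0] hA.rootIndex := by
  refine @measurable_to_countable' _ _ _ _ (ℱ 0) _ fun s => ?_
  convert hA.measurableSet_atom 0 s
  ext ω
  exact ⟨fun h => h ▸ hA.mem_atom_rootIndex ω, hA.rootIndex_eq_of_mem⟩

end CondA

section ProportionalOnRootAtoms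

variable {Ω : Type*} {m0 : MeasurableSpace Ω}

/-- Cross-multiplied form of `μ (A n j) / μ (A 0 s) = ν (A n j) / ν (A 0 s)` for every atom
`A n j` inside the level-`0` atom `A 0 s`. -/
def ProportionalOnRootAtoms (A : ℕ → ℕ → Set Ω) (μ ν : Measure Ω) : Prop :=
  ∀ n j s, A n j ⊆ A 0 s → μ (A n j) * ν (A 0 s) = ν (A n j) * μ (A 0 s)


variable {ℱ : Filtration ℕ m0} {A : ℕ → ℕ → Set Ω} {I : ℕ → ℕ → Set ℕ}

theorem CondA.proportionalOnRootAtoms_of_children (hA : CondA m0 ℱ A I) {μ ν : Measure Ω}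
    [IsFiniteMeasure ν] (hν : ∀ n s, ν (A n s) ≠ 0)
    (hchild : ∀ n s j, j ∈ I n s → μ (A (n + 1) j) * ν (A n s) = ν (A (n + 1) j) * μ (A n s)) :
    ProportionalOnRootAtoms A μ ν := by
  intro n
  induction n with
  | zero =>
    intro j s hjs
    obtain ⟨ω, hω⟩ := nonempty_of_measure_ne_zero (hν 0 j)
    rw [hA.eq_of_mem_atom hω (hjs hω), mul_comm]
  | succ n ih =>
    intro j s hjs
    obtain ⟨p, hjp⟩ := hA.exists_mem_index n j
    have hsub := hA.atom_subset_of_mem_index hjp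
    obtain ⟨ω, hω⟩ := nonempty_of_measure_ne_zero (hν (n + 1) j)
    have hroot := ih p s (hA.atom_subset_of_nonempty n.zero_le ⟨ω, hsub hω, hjs hω⟩)
    rw [← ENNReal.mul_left_inj (hν n p) (measure_ne_top ν _)]
    calc μ (A (n + 1) j) * ν (A 0 s) * ν (A n p)
        = μ (A (n + 1) j) * ν (A n p) * ν (A 0 s) := by ring
      _ = ν (A (n + 1) j) * (μ (A n p) * ν (A 0 s)) := by rw [hchild n p j hjp]; ring
      _ = ν (A (n + 1) j) * μ (A 0 s) * ν (A n p) := by rw [hroot]; ring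

theorem ProportionalOnRootAtoms.finset_sum {ι : Type*} (t : Finset ι) {μ : ι → Measure Ω}
    {ν : Measure Ω} (c : ι → ℝ≥0∞) (h : ∀ i ∈ t, ProportionalOnRootAtoms A (μ i) ν) :
    ProportionalOnRootAtoms A (∑ i ∈ t, c i • μ i) ν := by
  intro n j s hjs
  simp only [Measure.finsetSum_apply, Measure.smul_apply, smul_eq_mul, Finset.sum_mul,
    Finset.mul_sum]
  refine Finset.sum_congr rfl fun i hi => ?_
  rw [mul_assoc, h i hi n j s hjs]
  ring

theorem ProportionalOnRootAtoms.exists_eq_withDensity (hA : CondA m0 ℱ A I) {μ ν : Measure Ω}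
    [IsFiniteMeasure μ] [IsFiniteMeasure ν] (h : ProportionalOnRootAtoms A μ ν)
    (hν : ∀ s, ν (A 0 s) ≠ 0) :
    ∃ g : Ω → ℝ≥0, Measurable[ℱ 0] g ∧ μ = ν.withDensity fun ω => g ω := by
  let ratio : ℕ → ℝ≥0 := fun s => (μ (A 0 s) / ν (A 0 s)).toNNReal
  refine ⟨fun ω => ratio (hA.rootIndex ω),
    (measurable_from_top (f := ratio)).comp hA.measurable_rootIndex, hA.measure_ext fun n j => ?_⟩
  obtain ⟨s, hjs⟩ := hA.exists_atom_superset n.zero_le j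
  have hconst : EqOn (fun ω => (ratio (hA.rootIndex ω) : ℝ≥0∞))
      (fun _ => μ (A 0 s) / ν (A 0 s)) (A n j) := fun ω hω => by
    simp only [ratio, hA.rootIndex_eq_of_mem (hjs hω)]
    exact ENNReal.coe_toNNReal (ENNReal.div_ne_top (measure_ne_top μ _) (hν s))
  have hmeas : MeasurableSet (A n j) := ℱ.le n _ (hA.measurableSet_atom n j)
  rw [withDensity_apply _ hmeas, setLIntegral_congr_fun hmeas hconst, setLIntegral_const,
    ← ENNReal.mul_div_right_comm, ENNReal.eq_div_iff (hν s) (measure_ne_top ν _), mul_comm,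
    h n j s hjs, mul_comm]

theorem ProportionalOnRootAtoms.condExp_ae_eq (hA : CondA m0 ℱ A I) {μ ν : Measure Ω}
    [IsFiniteMeasure μ] [IsFiniteMeasure ν] (h : ProportionalOnRootAtoms A μ ν)
    (hν : ∀ s, ν (A 0 s) ≠ 0) {f : Ω → ℝ} (hfμ : Integrable f μ) (hfν : Integrable f ν)
    (n : ℕ) : μ[f|ℱ n] =ᵐ[μ] ν[f|ℱ n] := by
  obtain ⟨g, hg, rfl⟩ := h.exists_eq_withDensity hA hν
  exact condExp_withDensity_ae_eq (ℱ.le n) (hg.mono (ℱ.mono n.zero_le) le_rfl) hfν hfμ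

theorem CondB.measure_child_mul_eq (hA : CondA m0 ℱ A I) {k : ℕ} {P : Fin (k + 1) → Measure Ω}
    [∀ i, IsFiniteMeasure (P i)] {i₀ : Fin (k + 1)} (hB : CondB P A I i₀)
    (hpos : ∀ i n s, P i (A n s) ≠ 0) (i : Fin (k + 1)) {n s j : ℕ} (hj : j ∈ I n s) :
    P i (A (n + 1) j) * P i₀ (A n s) = P i₀ (A (n + 1) j) * P i (A n s) := by
  have hpos' : ∀ i n s, 0 < (P i (A n s)).toReal := fun i n s =>
    ENNReal.toReal_pos (hpos i n s) (measure_ne_top _ _)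
  have hle : ∀ j : I n s,
      P i (A (n + 1) j) * P i₀ (A n s) ≤ P i₀ (A (n + 1) j) * P i (A n s) := fun j => by
    have h := hB.dom i n s j j.2
    rw [div_le_div_iff₀ (hpos' i n s) (hpos' i₀ n s), ← ENNReal.toReal_mul,
      ← ENNReal.toReal_mul, ENNReal.toReal_le_toReal (by finiteness) (by finiteness)] at h
    exact h
  have hsum : ∀ μ ν : Measure Ω,
      ∑' j : I n s, μ (A (n + 1) j) * ν (A n s) = μ (A n s) * ν (A n s) := fun μ ν => by
    rw [ENNReal.tsum_mul_right, ← hA.measure_atom_eq_tsum]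
  refine ENNReal.eq_of_le_of_tsum_eq (by rw [hsum]; finiteness) hle ?_ ⟨j, hj⟩
  rw [hsum, hsum, mul_comm]

end ProportionalOnRootAtoms

section MixSet

variable {Ω : Type*} {m0 : MeasurableSpace Ω} {k : ℕ} {P : Fin (k + 1) → Measure Ω}
  {Q : Measure Ω}

theorem isProbabilityMeasure_of_mem_mixSet [∀ i, IsProbabilityMeasure (P i)]
    (hQ : Q ∈ mixSet P) : IsProbabilityMeasure Q := by
  obtain ⟨α, hα0, hα1, rfl⟩ := hQ
  constructor
  simp only [Measure.finsetSum_apply, Measure.smul_apply, measure_univ, smul_eq_mul, mul_one]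
  rw [← ENNReal.ofReal_sum_of_nonneg fun i _ => hα0 i, hα1, ENNReal.ofReal_one]

theorem integrable_of_mem_mixSet {f : Ω → ℝ} (hf : ∀ i, Integrable f (P i))
    (hQ : Q ∈ mixSet P) : Integrable f Q := by
  obtain ⟨α, -, -, rfl⟩ := hQ
  exact integrable_finsetSum_measure.mpr fun i _ => (hf i).smul_measure ENNReal.ofReal_ne_top

theorem integral_eq_of_mem_mixSet {f : Ω → ℝ} (hf : ∀ i, Integrable f (P i)) {c : ℝ}
    (hc : ∀ i, ∫ ω, f ω ∂(P i) = c) (hQ : Q ∈ mixSet P) : ∫ ω, f ω ∂Q = c := by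
  obtain ⟨α, hα0, hα1, rfl⟩ := hQ
  rw [integral_finsetSum_measure fun i _ => (hf i).smul_measure ENNReal.ofReal_ne_top]
  simp only [integral_smul_measure, hc, ENNReal.toReal_ofReal (hα0 _), smul_eq_mul]
  rw [← Finset.sum_mul, hα1, one_mul]

end MixSet

theorem iSup_condExp_ae_eq_condExp_of_mem_mixSet {Ω : Type*} {m0 : MeasurableSpace Ω}
    {ℱ : Filtration ℕ m0} {A : ℕ → ℕ → Set Ω} {I : ℕ → ℕ → Set ℕ} (hA : CondA m0 ℱ A I)
    {k : ℕ} {P : Fin (k + 1) → Measure Ω} [∀ i, IsProbabilityMeasure (P i)]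
    (hP_equiv : ∀ i j, P i ≪ P j) {i₀ : Fin (k + 1)} (hB : CondB P A I i₀) {ξ : Ω → ℝ}
    (hξ : ∀ i, Integrable ξ (P i)) {Q : Measure Ω} (hQ : Q ∈ mixSet P) (m : ℕ) :
    (fun ω => ⨆ i, ((P i)[ξ|ℱ m]) ω) =ᵐ[Q] Q[ξ|ℱ m] := by
  have := isProbabilityMeasure_of_mem_mixSet hQ
  have hpos : ∀ i n s, P i (A n s) ≠ 0 := fun i n s h0 => (hB.pos n s).ne' (hP_equiv 0 i h0)
  have hprop : ∀ i, ProportionalOnRootAtoms A (P i) (P i₀) := fun i =>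
    hA.proportionalOnRootAtoms_of_children (hpos i₀) fun _ _ _ hj =>
      hB.measure_child_mul_eq hA hpos i hj
  have hQprop : ProportionalOnRootAtoms A Q (P i₀) := by
    obtain ⟨α, -, -, rfl⟩ := hQ
    exact .finset_sum _ _ fun i _ => hprop i
  obtain ⟨g, -, hQg⟩ := hQprop.exists_eq_withDensity hA (hpos i₀ 0)
  have hQac : Q ≪ P i₀ := hQg ▸ withDensity_absolutelyContinuous _ _
  have hall : ∀ᵐ ω ∂Q, ∀ i, ((P i)[ξ|ℱ m]) ω = ((P i₀)[ξ|ℱ m]) ω := ae_all_iff.mpr fun i =>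
    (hQac.trans (hP_equiv i₀ i)).ae_eq
      ((hprop i).condExp_ae_eq hA (hpos i₀ 0) (hξ i) (hξ i₀) m)
  filter_upwards [hall, hQprop.condExp_ae_eq hA (hpos i₀ 0)
    (integrable_of_mem_mixSet hξ hQ) (hξ i₀) m] with ω hω hωQ
  simp only [hω, ciSup_const, hωQ]

theorem stmt14_general {Ω : Type*} {m0 : MeasurableSpace Ω}
    (ℱ : Filtration ℕ m0) (A : ℕ → ℕ → Set Ω) (I : ℕ → ℕ → Set ℕ)
    (hA : CondA m0 ℱ A I)
    (k : ℕ) (P : Fin (k + 1) → Measure Ω)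
    (hP_prob : ∀ i, IsProbabilityMeasure (P i))
    (hP_equiv : ∀ i j, P i ≪ P j)
    (i₀ : Fin (k + 1)) (hB : CondB P A I i₀)
    (ξ : Ω → ℝ) (hξ_int : ∀ i, Integrable ξ (P i))
    (M₀ : ℝ) (hM₀ : ∀ i, ∫ ω, ξ ω ∂(P i) = M₀) :
    (∀ Q ∈ mixSet P, ∀ m : ℕ,
      (Q[(fun ω => ⨆ i : Fin (k + 1), ((P i)[ξ | ℱ (m + 1)]) ω) | ℱ m]) =ᵐ[Q]
      fun ω => ⨆ i : Fin (k + 1), ((P i)[ξ | ℱ m]) ω) ∧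
    (∀ Q ∈ mixSet P, ∀ m : ℕ,
      ∫ ω, (⨆ i : Fin (k + 1), ((P i)[ξ | ℱ m]) ω) ∂Q = M₀) := by
  have hdoob := fun Q (hQ : Q ∈ mixSet P) =>
    iSup_condExp_ae_eq_condExp_of_mem_mixSet hA hP_equiv hB hξ_int hQ
  refine ⟨fun Q hQ m => ?_, fun Q hQ m => ?_⟩
  all_goals have := isProbabilityMeasure_of_mem_mixSet hQ
  · calc Q[(fun ω => ⨆ i, ((P i)[ξ|ℱ (m + 1)]) ω)|ℱ m]
        =ᵐ[Q] Q[Q[ξ|ℱ (m + 1)]|ℱ m] := condExp_congr_ae (hdoob Q hQ (m + 1))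
      _ =ᵐ[Q] Q[ξ|ℱ m] := condExp_condExp_of_le (ℱ.mono m.le_succ) (ℱ.le (m + 1))
      _ =ᵐ[Q] fun ω => ⨆ i, ((P i)[ξ|ℱ m]) ω := (hdoob Q hQ m).symm
  · rw [integral_congr_ae (hdoob Q hQ m), integral_condExp (ℱ.le m),
      integral_eq_of_mem_mixSet hξ_int hM₀ hQ]

/-- **Lemma `1q5` of the paper.**
Under conditions A and B, if `ξ ≥ 0` is integrable with respect to each `P i` and
`E^{P i} ξ = M₀` for all `i`, then `M m = max_i E^{P i}[ξ | ℱ m]` is a martingale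
relative to the convex hull `M` of the `P i` : for every `Q ∈ M` and `m ≥ 1`,
`E^Q[M m | ℱ (m-1)] = M (m-1)` a.s., and `E^Q (M m) = M₀` for all `m`. -/
theorem stmt14 {Ω : Type*} {m0 : MeasurableSpace Ω}
    (ℱ : Filtration ℕ m0) (A : ℕ → ℕ → Set Ω) (I : ℕ → ℕ → Set ℕ)
    (hA : CondA m0 ℱ A I)
    (k : ℕ) (P : Fin (k + 1) → Measure Ω)
    (hP_prob : ∀ i, IsProbabilityMeasure (P i))
    (hP_equiv : ∀ i j, P i ≪ P j)
    (i₀ : Fin (k + 1)) (hB : CondB P A I i₀)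
    (ξ : Ω → ℝ) (hξ_nonneg : ∀ ω, 0 ≤ ξ ω) (hξ_int : ∀ i, Integrable ξ (P i))
    (M₀ : ℝ) (hM₀ : ∀ i, ∫ ω, ξ ω ∂(P i) = M₀) :
    (∀ Q ∈ mixSet P, ∀ m : ℕ,
      (Q[(fun ω => ⨆ i : Fin (k + 1), ((P i)[ξ | ℱ (m + 1)]) ω) | ℱ m]) =ᵐ[Q]
      fun ω => ⨆ i : Fin (k + 1), ((P i)[ξ | ℱ m]) ω) ∧
    (∀ Q ∈ mixSet P, ∀ m : ℕ,
      ∫ ω, (⨆ i : Fin (k + 1), ((P i)[ξ | ℱ m]) ω) ∂Q = M₀) :=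
  stmt14_general ℱ A I hA k P hP_prob hP_equiv i₀ hB ξ hξ_int M₀ hM₀
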